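/- arXiv:2404.04507 — 2 statements merged into one kernel-verified Lean document; each statement's English description precedes it below -/
import Mathlib

section
/- Let 1 ≤ d < n be integers, let P ∈ ℝ^{d×n} have invertible leading d×d block P_I, set Q := P_I^{-1} P_II, and let α ≥ β ≥ 0. Then there exist constants 0 < c ≤ C, independent of the coefficient family, such that for every family c : ℤ^n → ℂ, c ( (Σ_k (1+‖P k‖^{2α})|c_k|²)^{1/2} + (Σ_k (1+‖k‖^{2β})|c_k|²)^{1/2} ) ≤ (Σ_k (1 + ‖k_I + Q k_II‖^{2α} + ‖k_II‖^{2β})|c_k|²)^{1/2} ≤ C ( (Σ_k (1+‖P k‖^{2α})|c_k|²)^{1/2} + (Σ_k (1+‖k‖^{2β})|c_k|²)^{1/2} ) (equality of all sides being ∞ allowed). -/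
open scoped ENNReal

/-- Euclidean norm of a vector in `ℝ^m`. -/
noncomputable def euclNorm {m : ℕ} (x : Fin m → ℝ) : ℝ :=
  ‖(EuclideanSpace.equiv (Fin m) ℝ).symm x‖

/-- Mixed weight `‖k_I + Q k_II‖^(2α) + ‖k_II‖^(2β)` (real powers, `0⁰ = 1`). -/
noncomputable def wMix (d m : ℕ) (Q : Matrix (Fin d) (Fin m) ℝ) (α β : ℝ)
    (k : Fin (d + m) → ℤ) : ℝ :=
  euclNorm ((fun i => (k (Fin.castAdd m i) : ℝ)) +
      Q.mulVec fun j => (k (Fin.natAdd d j) : ℝ)) ^ (2 * α) +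
    euclNorm (fun j => (k (Fin.natAdd d j) : ℝ)) ^ (2 * β)

/-- Weight `‖P k‖^(2α)`. -/
noncomputable def wP (d m : ℕ) (P : Matrix (Fin d) (Fin (d + m)) ℝ) (α : ℝ)
    (k : Fin (d + m) → ℤ) : ℝ :=
  euclNorm (P.mulVec fun i => (k i : ℝ)) ^ (2 * α)

/-- Weight `‖k‖^(2β)`. -/
noncomputable def wFull (d m : ℕ) (β : ℝ) (k : Fin (d + m) → ℤ) : ℝ :=
  euclNorm (fun i => (k i : ℝ)) ^ (2 * β)

lemma euclNorm_nonneg {m : ℕ} (x : Fin m → ℝ) : 0 ≤ euclNorm x := norm_nonneg _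

lemma euclNorm_eq {m : ℕ} (x : Fin m → ℝ) :
    euclNorm x = Real.sqrt (∑ i, x i ^ 2) := by
  rw [euclNorm, EuclideanSpace.norm_eq]
  congr 1
  refine Finset.sum_congr rfl fun i _ => ?_
  rw [Real.norm_eq_abs, sq_abs]; rfl

lemma euclNorm_add_le {m : ℕ} (x y : Fin m → ℝ) :
    euclNorm (x + y) ≤ euclNorm x + euclNorm y := by
  rw [euclNorm, euclNorm, euclNorm, map_add]
  exact norm_add_le _ _

lemma euclNorm_neg {m : ℕ} (x : Fin m → ℝ) : euclNorm (-x) = euclNorm x := by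
  rw [euclNorm, euclNorm, map_neg, norm_neg]

lemma exists_mulVec_bound {p q : ℕ} (A : Matrix (Fin p) (Fin q) ℝ) :
    ∃ C : ℝ, 0 ≤ C ∧ ∀ x : Fin q → ℝ, euclNorm (A.mulVec x) ≤ C * euclNorm x := by
  set f := (Matrix.toEuclideanLin A).toContinuousLinearMap
  refine ⟨‖f‖, norm_nonneg _, fun x => ?_⟩
  have h : euclNorm (A.mulVec x) = ‖f ((EuclideanSpace.equiv (Fin q) ℝ).symm x)‖ := rfl
  rw [h, euclNorm]
  exact f.le_opNorm _

lemma euclNorm_split {d m : ℕ} (x : Fin (d + m) → ℝ) :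
    euclNorm x = Real.sqrt ((∑ i : Fin d, x (Fin.castAdd m i) ^ 2) +
      ∑ j : Fin m, x (Fin.natAdd d j) ^ 2) := by
  rw [euclNorm_eq, Fin.sum_univ_add]

lemma euclNorm_snd_le {d m : ℕ} (x : Fin (d + m) → ℝ) :
    euclNorm (fun j => x (Fin.natAdd d j)) ≤ euclNorm x := by
  rw [euclNorm_eq, euclNorm_split]
  apply Real.sqrt_le_sqrt
  have : (0:ℝ) ≤ ∑ i : Fin d, x (Fin.castAdd m i) ^ 2 :=
    Finset.sum_nonneg fun _ _ => sq_nonneg _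
  linarith

lemma sqrt_add_le (a b : ℝ) (ha : 0 ≤ a) (hb : 0 ≤ b) :
    Real.sqrt (a + b) ≤ Real.sqrt a + Real.sqrt b := by
  have h : a + b ≤ (Real.sqrt a + Real.sqrt b) ^ 2 := by
    have := Real.sq_sqrt ha; have := Real.sq_sqrt hb
    nlinarith [mul_nonneg (Real.sqrt_nonneg a) (Real.sqrt_nonneg b)]
  calc Real.sqrt (a + b) ≤ Real.sqrt ((Real.sqrt a + Real.sqrt b) ^ 2) := Real.sqrt_le_sqrt h
    _ = Real.sqrt a + Real.sqrt b := Real.sqrt_sq (by positivity)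

lemma euclNorm_le_fst_add_snd {d m : ℕ} (x : Fin (d + m) → ℝ) :
    euclNorm x ≤ euclNorm (fun i => x (Fin.castAdd m i)) +
      euclNorm (fun j => x (Fin.natAdd d j)) := by
  rw [euclNorm_split, euclNorm_eq, euclNorm_eq]
  exact sqrt_add_le _ _ (Finset.sum_nonneg fun _ _ => sq_nonneg _)
    (Finset.sum_nonneg fun _ _ => sq_nonneg _)

lemma rpow_le_one_add_rpow {x s t : ℝ} (hx : 0 ≤ x) (hs : 0 ≤ s) (hst : s ≤ t) :
    x ^ s ≤ 1 + x ^ t := by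
  rcases le_or_gt x 1 with h | h
  · have : x ^ s ≤ 1 := Real.rpow_le_one hx h hs
    have ht : (0:ℝ) ≤ x ^ t := Real.rpow_nonneg hx t
    linarith
  · have : x ^ s ≤ x ^ t := Real.rpow_le_rpow_of_exponent_le h.le hst
    linarith

lemma add_rpow_le' {a b r : ℝ} (ha : 0 ≤ a) (hb : 0 ≤ b) (hr : 0 ≤ r) :
    (a + b) ^ r ≤ 2 ^ r * (a ^ r + b ^ r) := by
  have hm : a + b ≤ 2 * max a b := by
    rcases max_cases a b with ⟨h1, h2⟩ | ⟨h1, h2⟩ <;> rw [h1] <;> linarith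
  calc (a + b) ^ r ≤ (2 * max a b) ^ r :=
        Real.rpow_le_rpow (by linarith) hm hr
    _ = 2 ^ r * (max a b) ^ r := Real.mul_rpow (by norm_num) (le_max_iff.2 (Or.inl ha))
    _ ≤ 2 ^ r * (a ^ r + b ^ r) := by
        apply mul_le_mul_of_nonneg_left _ (Real.rpow_nonneg (by norm_num) r)
        rcases max_cases a b with ⟨h1, _⟩ | ⟨h1, _⟩ <;> rw [h1]
        · nlinarith [Real.rpow_nonneg hb r]
        · nlinarith [Real.rpow_nonneg ha r]

lemma wP_nonneg (d m : ℕ) (P : Matrix (Fin d) (Fin (d + m)) ℝ) (α : ℝ)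
    (k : Fin (d + m) → ℤ) : 0 ≤ wP d m P α k := Real.rpow_nonneg (euclNorm_nonneg _) _

lemma wFull_nonneg (d m : ℕ) (β : ℝ) (k : Fin (d + m) → ℤ) : 0 ≤ wFull d m β k :=
  Real.rpow_nonneg (euclNorm_nonneg _) _

lemma arith1 {p2 a2 b2 n1 : ℝ} (ha : 0 ≤ a2) (hb : 0 ≤ b2) (hn : 0 ≤ n1)
    (h : p2 ≤ n1 * a2) : 1 + p2 ≤ (1 + n1) * (1 + (a2 + b2)) := by nlinarith

lemma arith2 {a2 b2 cg : ℝ} (ha : 0 ≤ a2) (hb : 0 ≤ b2) (hc : 0 ≤ cg) :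
    1 + a2 + cg * b2 ≤ (1 + cg) * (1 + (a2 + b2)) := by nlinarith

lemma arith3 {a2 b2 p2 f2 n2 : ℝ} (hp : 0 ≤ p2) (hf : 0 ≤ f2) (hn : 0 ≤ n2)
    (h1 : a2 ≤ n2 * p2) (h2 : b2 ≤ f2) :
    1 + (a2 + b2) ≤ (1 + n2) * ((1 + p2) + (1 + f2)) := by nlinarith

lemma one_add_le_mul {w w' K : ℝ} (hw' : 0 ≤ w') (hK : 0 ≤ K) (h : w ≤ K * (1 + w')) :
    1 + w ≤ (1 + K) * (1 + w') := by nlinarith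

lemma mulVec_split {d m : ℕ} (P : Matrix (Fin d) (Fin (d + m)) ℝ) (x : Fin (d + m) → ℝ) :
    P.mulVec x = (P.submatrix id (Fin.castAdd m)).mulVec (fun i => x (Fin.castAdd m i)) +
      (P.submatrix id (Fin.natAdd d)).mulVec (fun j => x (Fin.natAdd d j)) := by
  funext i
  simp [Matrix.mulVec, dotProduct, Fin.sum_univ_add, Matrix.submatrix]

lemma tsum_ofReal_mono_of_weight {ι : Type*} (w1 w2 : ι → ℝ) (g : ι → ℝ)
    (hg : ∀ i, 0 ≤ g i) (K : ℝ) (hK : 0 ≤ K) (h : ∀ i, w1 i ≤ K * w2 i) :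
    ∑' i, ENNReal.ofReal (w1 i * g i) ≤ ENNReal.ofReal K * ∑' i, ENNReal.ofReal (w2 i * g i) := by
  rw [← ENNReal.tsum_mul_left]
  apply ENNReal.tsum_le_tsum; intro i
  rw [← ENNReal.ofReal_mul hK]
  apply ENNReal.ofReal_le_ofReal
  rw [← mul_assoc]
  exact mul_le_mul_of_nonneg_right (h i) (hg i)

lemma rpow_half_le {X Y : ℝ≥0∞} {K : ℝ} (hK : 0 ≤ K) (h : X ≤ ENNReal.ofReal K * Y) :
    X ^ ((1:ℝ)/2) ≤ ENNReal.ofReal (K ^ ((1:ℝ)/2)) * Y ^ ((1:ℝ)/2) := by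
  calc X ^ ((1:ℝ)/2) ≤ (ENNReal.ofReal K * Y) ^ ((1:ℝ)/2) :=
        ENNReal.rpow_le_rpow h (by norm_num)
    _ = (ENNReal.ofReal K) ^ ((1:ℝ)/2) * Y ^ ((1:ℝ)/2) :=
        ENNReal.mul_rpow_of_nonneg _ _ (by norm_num)
    _ = ENNReal.ofReal (K ^ ((1:ℝ)/2)) * Y ^ ((1:ℝ)/2) := by
        rw [← ENNReal.ofReal_rpow_of_nonneg hK (by norm_num)]

/-- norm equivalence `c₀ (‖u‖_α + ‖U‖_{H^β}) ≤ ‖u‖_{α,β} ≤ C (‖u‖_α + ‖U‖_{H^β})`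
for all coefficient families (value `∞` allowed on all sides). -/
theorem stmt4 (d m : ℕ) (hd : 1 ≤ d) (hm : 1 ≤ m)
    (P : Matrix (Fin d) (Fin (d + m)) ℝ)
    (PI : Matrix (Fin d) (Fin d) ℝ) (hPI : PI = P.submatrix id (Fin.castAdd m))
    (PII : Matrix (Fin d) (Fin m) ℝ) (hPII : PII = P.submatrix id (Fin.natAdd d))
    (hinv : IsUnit PI)
    (Q : Matrix (Fin d) (Fin m) ℝ) (hQ : Q = PI⁻¹ * PII)
    (α β : ℝ) (hβ : 0 ≤ β) (hαβ : β ≤ α) :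
    ∃ c₀ C : ℝ, 0 < c₀ ∧ c₀ ≤ C ∧ ∀ c : (Fin (d + m) → ℤ) → ℂ,
      ENNReal.ofReal c₀ *
          ((∑' k : Fin (d + m) → ℤ,
              ENNReal.ofReal ((1 + wP d m P α k) * ‖c k‖ ^ 2)) ^ ((1 : ℝ) / 2) +
            (∑' k : Fin (d + m) → ℤ,
              ENNReal.ofReal ((1 + wFull d m β k) * ‖c k‖ ^ 2)) ^ ((1 : ℝ) / 2)) ≤
        (∑' k : Fin (d + m) → ℤ,
            ENNReal.ofReal ((1 + wMix d m Q α β k) * ‖c k‖ ^ 2)) ^ ((1 : ℝ) / 2) ∧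
      (∑' k : Fin (d + m) → ℤ,
          ENNReal.ofReal ((1 + wMix d m Q α β k) * ‖c k‖ ^ 2)) ^ ((1 : ℝ) / 2) ≤
        ENNReal.ofReal C *
          ((∑' k : Fin (d + m) → ℤ,
              ENNReal.ofReal ((1 + wP d m P α k) * ‖c k‖ ^ 2)) ^ ((1 : ℝ) / 2) +
            (∑' k : Fin (d + m) → ℤ,
              ENNReal.ofReal ((1 + wFull d m β k) * ‖c k‖ ^ 2)) ^ ((1 : ℝ) / 2)) := by
  have hα : 0 ≤ α := le_trans hβ hαβ
  have hdet : IsUnit PI.det := (Matrix.isUnit_iff_isUnit_det PI).mp hinv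
  obtain ⟨N1, hN1, hb1⟩ := exists_mulVec_bound PI
  obtain ⟨N2, hN2, hb2⟩ := exists_mulVec_bound (PI⁻¹)
  obtain ⟨N3, hN3, hb3⟩ := exists_mulVec_bound Q
  -- constants
  set K1 : ℝ := 1 + N1 ^ (2*α) with hK1def
  set K2 : ℝ := 1 + 2 ^ (2*β) * (1 + (1 + N3) ^ (2*β)) with hK2def
  set K3 : ℝ := 1 + N2 ^ (2*α) with hK3def
  have hK1 : 1 ≤ K1 := by
    have := Real.rpow_nonneg hN1 (2*α); simp [hK1def]; linarith
  have hK2 : 1 ≤ K2 := by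
    have h1 := Real.rpow_nonneg (show (0:ℝ) ≤ 2 by norm_num) (2*β)
    have h2 := Real.rpow_nonneg (show (0:ℝ) ≤ 1 + N3 by linarith) (2*β)
    simp only [hK2def]; nlinarith
  have hK3 : 1 ≤ K3 := by
    have := Real.rpow_nonneg hN2 (2*α); simp [hK3def]; linarith
  -- pointwise weight inequalities
  have key : ∀ k : Fin (d + m) → ℤ,
      1 + wP d m P α k ≤ K1 * (1 + wMix d m Q α β k) ∧
      1 + wFull d m β k ≤ K2 * (1 + wMix d m Q α β k) ∧
      1 + wMix d m Q α β k ≤ K3 * ((1 + wP d m P α k) + (1 + wFull d m β k)) := by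
    intro k
    set kr : Fin (d + m) → ℝ := fun i => (k i : ℝ) with hkr
    set u : Fin d → ℝ := fun i => kr (Fin.castAdd m i) with hu
    set v : Fin m → ℝ := fun j => kr (Fin.natAdd d j) with hv
    set w : Fin d → ℝ := u + Q.mulVec v with hw
    set a : ℝ := euclNorm w with hadef
    set b : ℝ := euclNorm v with hbdef
    set p : ℝ := euclNorm (P.mulVec kr) with hpdef
    set f : ℝ := euclNorm kr with hfdef
    have ha0 : 0 ≤ a := euclNorm_nonneg _
    have hb0 : 0 ≤ b := euclNorm_nonneg _
    have hp0 : 0 ≤ p := euclNorm_nonneg _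
    have hf0 : 0 ≤ f := euclNorm_nonneg _
    -- linear algebra: P k = PI w
    have hPk : P.mulVec kr = PI.mulVec w := by
      rw [mulVec_split P kr, hw, Matrix.mulVec_add, Matrix.mulVec_mulVec, hQ,
        Matrix.mul_nonsing_inv_cancel_left _ _ hdet, hPI, hPII]
    have hwinv : w = PI⁻¹.mulVec (P.mulVec kr) := by
      rw [hPk, Matrix.mulVec_mulVec, Matrix.nonsing_inv_mul _ hdet, Matrix.one_mulVec]
    have h1 : p ≤ N1 * a := by rw [hpdef, hPk]; exact hb1 w
    have h2 : a ≤ N2 * p := by rw [hadef, hwinv]; exact hb2 _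
    have h3 : b ≤ f := euclNorm_snd_le kr
    have h4 : f ≤ a + (1 + N3) * b := by
      have hfle : f ≤ euclNorm u + b := euclNorm_le_fst_add_snd kr
      have huw : u = w + (-(Q.mulVec v)) := by rw [hw]; abel
      have : euclNorm u ≤ a + N3 * b := by
        rw [huw]
        calc euclNorm (w + -(Q.mulVec v)) ≤ euclNorm w + euclNorm (-(Q.mulVec v)) :=
              euclNorm_add_le _ _
          _ = a + euclNorm (Q.mulVec v) := by rw [euclNorm_neg]
          _ ≤ a + N3 * b := by linarith [hb3 v]
      linarith
    -- identify the weights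
    have hwP : wP d m P α k = p ^ (2*α) := rfl
    have hwF : wFull d m β k = f ^ (2*β) := rfl
    have hwM : wMix d m Q α β k = a ^ (2*α) + b ^ (2*β) := rfl
    have ha2 : 0 ≤ a ^ (2*α) := Real.rpow_nonneg ha0 _
    have hb2' : 0 ≤ b ^ (2*β) := Real.rpow_nonneg hb0 _
    have hp2 : 0 ≤ p ^ (2*α) := Real.rpow_nonneg hp0 _
    have hf2 : 0 ≤ f ^ (2*β) := Real.rpow_nonneg hf0 _
    have hn1 : 0 ≤ N1 ^ (2*α) := Real.rpow_nonneg hN1 _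
    have hn2 : 0 ≤ N2 ^ (2*α) := Real.rpow_nonneg hN2 _
    refine ⟨?_, ?_, ?_⟩
    · -- 1 + wP ≤ K1 (1 + wMix)
      have e1 : p ^ (2*α) ≤ N1 ^ (2*α) * a ^ (2*α) := by
        calc p ^ (2*α) ≤ (N1 * a) ^ (2*α) := Real.rpow_le_rpow hp0 h1 (by positivity)
          _ = N1 ^ (2*α) * a ^ (2*α) := Real.mul_rpow hN1 ha0
      rw [hwP, hwM, hK1def]; exact arith1 ha2 hb2' hn1 e1
    · -- 1 + wFull ≤ K2 (1 + wMix)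
      have c3 : (0:ℝ) ≤ 1 + N3 := by linarith
      have e1 : f ^ (2*β) ≤ (a + (1 + N3) * b) ^ (2*β) :=
        Real.rpow_le_rpow hf0 h4 (by positivity)
      have e2 : (a + (1 + N3) * b) ^ (2*β) ≤
          2 ^ (2*β) * (a ^ (2*β) + ((1 + N3) * b) ^ (2*β)) :=
        add_rpow_le' ha0 (by positivity) (by positivity)
      have e3 : ((1 + N3) * b) ^ (2*β) = (1 + N3) ^ (2*β) * b ^ (2*β) :=
        Real.mul_rpow c3 hb0
      have e4 : a ^ (2*β) ≤ 1 + a ^ (2*α) :=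
        rpow_le_one_add_rpow ha0 (by positivity) (by linarith)
      have h2p : (0:ℝ) ≤ 2 ^ (2*β) := Real.rpow_nonneg (by norm_num) _
      have hc3p : (0:ℝ) ≤ (1 + N3) ^ (2*β) := Real.rpow_nonneg c3 _
      have inner : 1 + a ^ (2*α) + (1 + N3) ^ (2*β) * b ^ (2*β) ≤
          (1 + (1 + N3) ^ (2*β)) * (1 + (a ^ (2*α) + b ^ (2*β))) :=
        arith2 ha2 hb2' hc3p
      have hfin : f ^ (2*β) ≤ 2 ^ (2*β) * (1 + (1 + N3) ^ (2*β)) *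
          (1 + (a ^ (2*α) + b ^ (2*β))) := by
        calc f ^ (2*β) ≤ (a + (1 + N3) * b) ^ (2*β) := e1
          _ ≤ 2 ^ (2*β) * (a ^ (2*β) + ((1 + N3) * b) ^ (2*β)) := e2
          _ = 2 ^ (2*β) * (a ^ (2*β) + (1 + N3) ^ (2*β) * b ^ (2*β)) := by rw [e3]
          _ ≤ 2 ^ (2*β) * ((1 + a ^ (2*α)) + (1 + N3) ^ (2*β) * b ^ (2*β)) := by
              apply mul_le_mul_of_nonneg_left _ h2p; linarith
          _ ≤ 2 ^ (2*β) * ((1 + (1 + N3) ^ (2*β)) * (1 + (a ^ (2*α) + b ^ (2*β)))) := by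
              apply mul_le_mul_of_nonneg_left _ h2p; linarith [inner]
          _ = 2 ^ (2*β) * (1 + (1 + N3) ^ (2*β)) * (1 + (a ^ (2*α) + b ^ (2*β))) := by ring
      rw [hwF, hwM, hK2def]
      exact one_add_le_mul (by positivity) (by positivity) hfin
    · -- 1 + wMix ≤ K3 ((1+wP)+(1+wFull))
      have e1 : a ^ (2*α) ≤ N2 ^ (2*α) * p ^ (2*α) := by
        calc a ^ (2*α) ≤ (N2 * p) ^ (2*α) := Real.rpow_le_rpow ha0 h2 (by positivity)
          _ = N2 ^ (2*α) * p ^ (2*α) := Real.mul_rpow hN2 hp0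
      have e2 : b ^ (2*β) ≤ f ^ (2*β) := Real.rpow_le_rpow hb0 h3 (by positivity)
      rw [hwM, hwP, hwF, hK3def]; exact arith3 hp2 hf2 hn2 e1 e2
  -- assemble
  set r : ℝ := (1:ℝ)/2 with hr
  set c₀ : ℝ := 1 / (K1 ^ r + K2 ^ r) with hc0def
  have hK1r : (1:ℝ) ≤ K1 ^ r := Real.one_le_rpow hK1 (by norm_num)
  have hK2r : (1:ℝ) ≤ K2 ^ r := Real.one_le_rpow hK2 (by norm_num)
  have hSpos : (0:ℝ) < K1 ^ r + K2 ^ r := by linarith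
  have hc0pos : 0 < c₀ := by rw [hc0def]; positivity
  refine ⟨c₀, max (K3 ^ r) c₀, hc0pos, le_max_right _ _, fun c => ?_⟩
  set g : (Fin (d + m) → ℤ) → ℝ := fun k => ‖c k‖ ^ 2 with hg
  have hg0 : ∀ k, 0 ≤ g k := fun k => sq_nonneg _
  set A := ∑' k : Fin (d + m) → ℤ, ENNReal.ofReal ((1 + wP d m P α k) * g k) with hA
  set B := ∑' k : Fin (d + m) → ℤ, ENNReal.ofReal ((1 + wFull d m β k) * g k) with hB
  set M := ∑' k : Fin (d + m) → ℤ, ENNReal.ofReal ((1 + wMix d m Q α β k) * g k) with hM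
  have hAM : A ≤ ENNReal.ofReal K1 * M :=
    tsum_ofReal_mono_of_weight _ _ g hg0 K1 (by linarith) fun k => (key k).1
  have hBM : B ≤ ENNReal.ofReal K2 * M :=
    tsum_ofReal_mono_of_weight _ _ g hg0 K2 (by linarith) fun k => (key k).2.1
  have hMAB : M ≤ ENNReal.ofReal K3 * (A + B) := by
    have step : M ≤ ENNReal.ofReal K3 *
        ∑' k : Fin (d + m) → ℤ,
          ENNReal.ofReal (((1 + wP d m P α k) + (1 + wFull d m β k)) * g k) :=
      tsum_ofReal_mono_of_weight _ _ g hg0 K3 (by linarith) fun k => (key k).2.2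
    refine step.trans ?_
    apply mul_le_mul_right ; rw [hA, hB, ← ENNReal.tsum_add]
    apply ENNReal.tsum_le_tsum; intro k
    have hwp0 : 0 ≤ (1 + wP d m P α k) * g k :=
      mul_nonneg (by linarith [wP_nonneg d m P α k]) (hg0 k)
    have hwf0 : 0 ≤ (1 + wFull d m β k) * g k :=
      mul_nonneg (by linarith [wFull_nonneg d m β k]) (hg0 k)
    rw [add_mul, ENNReal.ofReal_add hwp0 hwf0]
  -- lower bound
  have hAr : A ^ r ≤ ENNReal.ofReal (K1 ^ r) * M ^ r := rpow_half_le (by linarith) hAM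
  have hBr : B ^ r ≤ ENNReal.ofReal (K2 ^ r) * M ^ r := rpow_half_le (by linarith) hBM
  constructor
  · have hsum : A ^ r + B ^ r ≤ ENNReal.ofReal (K1 ^ r + K2 ^ r) * M ^ r := by
      calc A ^ r + B ^ r ≤ ENNReal.ofReal (K1 ^ r) * M ^ r + ENNReal.ofReal (K2 ^ r) * M ^ r :=
            add_le_add hAr hBr
        _ = ENNReal.ofReal (K1 ^ r + K2 ^ r) * M ^ r := by
            rw [ENNReal.ofReal_add (by linarith) (by linarith), add_mul]
    calc ENNReal.ofReal c₀ * (A ^ r + B ^ r)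
        ≤ ENNReal.ofReal c₀ * (ENNReal.ofReal (K1 ^ r + K2 ^ r) * M ^ r) :=
          mul_le_mul_right hsum _
      _ = ENNReal.ofReal (c₀ * (K1 ^ r + K2 ^ r)) * M ^ r := by
          rw [ENNReal.ofReal_mul hc0pos.le, mul_assoc]
      _ = M ^ r := by
          rw [hc0def, one_div, inv_mul_cancel₀ hSpos.ne', ENNReal.ofReal_one, one_mul]
  · -- upper bound
    have h1 : M ^ r ≤ ENNReal.ofReal (K3 ^ r) * (A + B) ^ r := rpow_half_le (by linarith) hMAB
    have h2 : (A + B) ^ r ≤ A ^ r + B ^ r := by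
      rw [hr]; exact ENNReal.rpow_add_le_add_rpow A B (by norm_num) (by norm_num)
    calc M ^ r ≤ ENNReal.ofReal (K3 ^ r) * (A ^ r + B ^ r) :=
          h1.trans (mul_le_mul_right h2 _)
      _ ≤ ENNReal.ofReal (max (K3 ^ r) c₀) * (A ^ r + B ^ r) :=
          mul_le_mul_left (ENNReal.ofReal_le_ofReal (le_max_left _ _)) _
end

section
/- Let 1 ≤ d < n be integers, Q ∈ ℝ^{d×(n−d)}, and let α ≥ β > (n−d)/2 satisfy d/(2α) + (n−d)/(2β) < 1 and α > d/2. Then there exists a constant C > 0, independent of K and L, such that for all positive integers K, L and every k ∈ 𝒦_{K,L}, Σ_{m ∈ ℤ^n ∖ {0}} ( ‖k_I + 2K m_I + Q(k_II + 2L m_II)‖^{2α} + ‖k_II + 2L m_II‖^{2β} )^{−1} ≤ C (K^{−2α} + L^{−2β}), where m = (m_I, m_II) with m_I ∈ ℤ^d and m_II ∈ ℤ^{n−d}; in particular every summand is finite because the quantity in parentheses is strictly positive for m ≠ 0 and k ∈ 𝒦_{K,L}. -/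
open scoped ENNReal

/-- Membership in the parallelogram index set `𝒦_{K,L}`:
each component of `k_I + Q k_II` lies in `[-K, K)` and each component of `k_II` in `[-L, L)`. -/
def memK (d m : ℕ) (Q : Matrix (Fin d) (Fin m) ℝ) (K L : ℕ) (k : Fin (d + m) → ℤ) : Prop :=
  (∀ i : Fin d,
      -(K : ℝ) ≤ (k (Fin.castAdd m i) : ℝ) + Q.mulVec (fun j => (k (Fin.natAdd d j) : ℝ)) i ∧
      (k (Fin.castAdd m i) : ℝ) + Q.mulVec (fun j => (k (Fin.natAdd d j) : ℝ)) i < (K : ℝ)) ∧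
  (∀ j : Fin m, -(L : ℤ) ≤ k (Fin.natAdd d j) ∧ k (Fin.natAdd d j) < (L : ℤ))

/-- The shifted index `(k_I + 2K v_I, k_II + 2L v_II)`. -/
def shiftIdx (d m K L : ℕ) (k v : Fin (d + m) → ℤ) : Fin (d + m) → ℤ :=
  Fin.append (fun i => k (Fin.castAdd m i) + 2 * (K : ℤ) * v (Fin.castAdd m i))
    fun j => k (Fin.natAdd d j) + 2 * (L : ℤ) * v (Fin.natAdd d j)

/-!
Write `v = (u, w)` with `u ∈ ℤ^d`, `w ∈ ℤ^m`, `m = n - d`. Since `k ∈ 𝒦_{K,L}`, the second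
block satisfies `‖k_II + 2L w‖ ≥ L ‖w‖`. For fixed `w` the first block is `x + 2K u` with `x`
independent of `u`; rounding `x / 2K` to a lattice point `s` gives `‖x + 2K u‖ ≥ K ‖u + s‖`, and
`s = 0` when `w = 0` because then `x = k_I + Q k_II` has coordinates in `[-K, K)`. Translating
`u ↦ u + s` in each fibre bounds the sum by the model sum
`∑_{(u,w) ≠ 0} ((K‖u‖)^(2α) + (L‖w‖)^(2β))⁻¹`.

Let `ζ_n(r) = latticeZeta n r = ∑_{w ∈ ℤⁿ∖0} ‖w‖^(-r)`, finite for `r > n`. The part `w = 0` of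
the model sum is `K^(-2α) ζ_d(2α)`. For `w ≠ 0` the term `u = 0` contributes `L^(-2β) ‖w‖^(-2β)`,
and the others are bounded through `A + T ≥ A^t T^(1-t)`, where `d < 2αt` and `m < 2β(1-t)`: such
a `t` exists exactly because `d/(2α) + m/(2β) < 1`. They contribute at most
`K^(-2αt) L^(-2β(1-t)) ζ_d(2αt) ζ_m(2β(1-t))`, and `K^(-2αt) L^(-2β(1-t)) ≤ K^(-2α) + L^(-2β)`.
-/

lemma abs_le_euclNorm {n : ℕ} (x : Fin n → ℝ) (i : Fin n) : |x i| ≤ euclNorm x := by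
  simpa [euclNorm] using PiLp.norm_apply_le ((EuclideanSpace.equiv (Fin n) ℝ).symm x) i

lemma mul_euclNorm_le_euclNorm {n : ℕ} {c : ℝ} (hc : 0 ≤ c) {x y : Fin n → ℝ}
    (h : ∀ i, c * |x i| ≤ |y i|) : c * euclNorm x ≤ euclNorm y := by
  simp only [euclNorm, EuclideanSpace.norm_eq]
  rw [← Real.sqrt_sq hc, ← Real.sqrt_mul (sq_nonneg c), Finset.mul_sum]
  gcongr with i
  rw [← mul_pow]
  exact pow_le_pow_left₀ (by positivity) (h i) 2

noncomputable def intEuclNorm {n : ℕ} (w : Fin n → ℤ) : ℝ := euclNorm fun i => (w i : ℝ)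

lemma intEuclNorm_nonneg {n : ℕ} (w : Fin n → ℤ) : 0 ≤ intEuclNorm w := norm_nonneg _

@[simp]
lemma intEuclNorm_zero {n : ℕ} : intEuclNorm (0 : Fin n → ℤ) = 0 := by
  simp [intEuclNorm, euclNorm, ← Pi.zero_def]

lemma one_le_intEuclNorm {n : ℕ} {w : Fin n → ℤ} (hw : w ≠ 0) : 1 ≤ intEuclNorm w := by
  obtain ⟨i, hi⟩ := Function.ne_iff.mp hw
  calc (1 : ℝ) ≤ |(w i : ℝ)| := by exact_mod_cast Int.one_le_abs hi
    _ ≤ intEuclNorm w := abs_le_euclNorm (fun j => (w j : ℝ)) i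

lemma summable_intEuclNorm_rpow_neg {n : ℕ} {r : ℝ} (hr : (n : ℝ) < r) :
    Summable fun w : Fin n → ℤ => intEuclNorm w ^ (-r) := by
  let b := (EuclideanSpace.basisFun (Fin n) ℝ).toBasis
  have hrank : Module.finrank ℤ (Submodule.span ℤ (Set.range b)) = n := by
    rw [Module.finrank_eq_card_basis (b.restrictScalars ℤ), Fintype.card_fin]
  have hL := ZLattice.summable_norm_rpow (Submodule.span ℤ (Set.range b)) (-r)
    (by rw [hrank]; linarith)
  have hcoe : ∀ w : Fin n → ℤ, ((b.restrictScalars ℤ).equivFun.symm w : EuclideanSpace ℝ (Fin n)) =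
      (EuclideanSpace.equiv (Fin n) ℝ).symm fun i => (w i : ℝ) := fun w => by
    simp only [Module.Basis.equivFun_symm_apply, AddSubmonoidClass.coe_finsetSum, SetLike.val_smul,
      Module.Basis.restrictScalars_apply]
    ext i
    simp [b, Pi.single_apply]
  convert (b.restrictScalars ℤ).equivFun.symm.toEquiv.summable_iff.mpr hL using 2 with w
  rw [Function.comp_apply, Submodule.coe_norm, LinearEquiv.coe_toEquiv, hcoe, intEuclNorm, euclNorm]

noncomputable def latticeZeta (n : ℕ) (r : ℝ) : ℝ≥0∞ :=
  ∑' w : Fin n → ℤ, if w = 0 then 0 else ENNReal.ofReal (intEuclNorm w ^ (-r))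

lemma latticeZeta_lt_top {n : ℕ} {r : ℝ} (hr : (n : ℝ) < r) : latticeZeta n r < ⊤ :=
  calc latticeZeta n r ≤ ∑' w : Fin n → ℤ, ENNReal.ofReal (intEuclNorm w ^ (-r)) :=
        ENNReal.tsum_le_tsum fun w => by split_ifs <;> simp
    _ = ENNReal.ofReal (∑' w : Fin n → ℤ, intEuclNorm w ^ (-r)) :=
        (ENNReal.ofReal_tsum_of_nonneg (fun w => by have := intEuclNorm_nonneg w; positivity)
          (summable_intEuclNorm_rpow_neg hr)).symm
    _ < ⊤ := ENNReal.ofReal_lt_top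

lemma mul_abs_intCast_le_abs_add {x c : ℝ} (hx : |x| ≤ c) (z : ℤ) :
    c * |(z : ℝ)| ≤ |x + 2 * c * z| := by
  rcases eq_or_ne z 0 with rfl | hz
  · simp
  have hz1 : (1 : ℝ) ≤ |(z : ℝ)| := by exact_mod_cast Int.one_le_abs hz
  have hc : 0 ≤ c := (abs_nonneg x).trans hx
  have h := abs_sub (x + 2 * c * z) x
  rw [add_sub_cancel_left, abs_mul, abs_of_nonneg (by positivity : (0 : ℝ) ≤ 2 * c)] at h
  nlinarith

lemma mul_abs_add_round_le_abs_add {c : ℝ} (hc : 0 < c) (x : ℝ) (z : ℤ) :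
    c * |((z + round (x / (2 * c)) : ℤ) : ℝ)| ≤ |x + 2 * c * z| := by
  set r := round (x / (2 * c))
  have h2c : 0 < 2 * c := by positivity
  have hx : |x - 2 * c * r| ≤ c := by
    have hr := abs_sub_round (x / (2 * c))
    calc |x - 2 * c * r| = |2 * c * (x / (2 * c) - r)| := by
          congr 1
          field_simp
      _ = 2 * c * |x / (2 * c) - r| := by rw [abs_mul, abs_of_pos h2c]
      _ ≤ c := by nlinarith
  convert mul_abs_intCast_le_abs_add hx (z + r) using 2
  push_cast
  ring

lemma mul_intEuclNorm_le_euclNorm {n : ℕ} {c : ℝ} (hc : 0 ≤ c) {x : Fin n → ℝ}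
    (hx : ∀ i, |x i| ≤ c) (z : Fin n → ℤ) :
    c * intEuclNorm z ≤ euclNorm fun i => x i + 2 * c * z i :=
  mul_euclNorm_le_euclNorm hc fun i => mul_abs_intCast_le_abs_add (hx i) (z i)

lemma exists_mul_intEuclNorm_add_le_euclNorm {n : ℕ} {c : ℝ} (hc : 0 < c) (x : Fin n → ℝ) :
    ∃ s : Fin n → ℤ, ∀ z, c * intEuclNorm (z + s) ≤ euclNorm fun i => x i + 2 * c * z i :=
  ⟨fun i => round (x i / (2 * c)), fun z => mul_euclNorm_le_euclNorm hc.le fun i => by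
    simpa using mul_abs_add_round_le_abs_add hc (x i) (z i)⟩

lemma rpow_mul_rpow_one_sub_le_add {A T t : ℝ} (hA : 0 ≤ A) (hT : 0 ≤ T) (ht0 : 0 ≤ t)
    (ht1 : t ≤ 1) : A ^ t * T ^ (1 - t) ≤ A + T := by
  have := Real.geom_mean_le_arith_mean2_weighted ht0 (sub_nonneg.mpr ht1) hA hT (by ring)
  nlinarith

lemma mul_rpow_rpow_neg {x y b e : ℝ} (hx : 0 ≤ x) (hy : 0 ≤ y) :
    ((x * y) ^ b) ^ (-e) = x ^ (-(b * e)) * y ^ (-(b * e)) := by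
  rw [← Real.rpow_mul (by positivity), ← Real.mul_rpow hx hy, mul_neg]

lemma tsum_inv_rpow_add_le {n : ℕ} {K T a t : ℝ} (hK : 0 < K) (hT : 0 < T) (ha : 0 < a)
    (ht0 : 0 < t) (ht1 : t < 1) :
    ∑' u : Fin n → ℤ, ENNReal.ofReal (((K * intEuclNorm u) ^ a + T)⁻¹) ≤
      ENNReal.ofReal T⁻¹ +
        ENNReal.ofReal (K ^ (-(a * t)) * T ^ (-(1 - t))) * latticeZeta n (a * t) := by
  rw [ENNReal.tsum_eq_add_tsum_ite 0, latticeZeta, ← ENNReal.tsum_mul_left]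
  gcongr with u
  · simp [Real.zero_rpow ha.ne']
  split_ifs with hu
  · simp
  have hu1 := one_le_intEuclNorm hu
  rw [← ENNReal.ofReal_mul (by positivity)]
  gcongr
  calc ((K * intEuclNorm u) ^ a + T)⁻¹ ≤ (((K * intEuclNorm u) ^ a) ^ t * T ^ (1 - t))⁻¹ :=
        inv_anti₀ (by positivity)
          (rpow_mul_rpow_one_sub_le_add (by positivity) hT.le ht0.le ht1.le)
    _ = K ^ (-(a * t)) * T ^ (-(1 - t)) * intEuclNorm u ^ (-(a * t)) := by
        rw [mul_inv, ← Real.rpow_neg (by positivity), ← Real.rpow_neg hT.le,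
          mul_rpow_rpow_neg hK.le (by positivity)]
        ring

noncomputable def modelWeight {d m : ℕ} (K L a b : ℝ) (p : (Fin d → ℤ) × (Fin m → ℤ)) : ℝ :=
  (K * intEuclNorm p.1) ^ a + (L * intEuclNorm p.2) ^ b

lemma modelWeight_pos {d m : ℕ} {K L a b : ℝ} (hK : 0 < K) (hL : 0 < L)
    {p : (Fin d → ℤ) × (Fin m → ℤ)} (hp : p ≠ 0) : 0 < modelWeight K L a b p := by
  have := intEuclNorm_nonneg p.1
  have := intEuclNorm_nonneg p.2
  rcases eq_or_ne p.1 0 with h1 | h1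
  · have h2 : p.2 ≠ 0 := fun h2 => hp (Prod.ext h1 h2)
    have := one_le_intEuclNorm h2
    exact add_pos_of_nonneg_of_pos (by positivity) (by positivity)
  · have := one_le_intEuclNorm h1
    exact add_pos_of_pos_of_nonneg (by positivity) (by positivity)

lemma tsum_inv_modelWeight_zero_fiber {d m : ℕ} {K L a b : ℝ} (hK : 0 < K) (hb : 0 < b) :
    ∑' u : Fin d → ℤ, (if (u, (0 : Fin m → ℤ)) = 0 then 0
        else ENNReal.ofReal (modelWeight K L a b (u, (0 : Fin m → ℤ)))⁻¹) =
      ENNReal.ofReal (K ^ (-a)) * latticeZeta d a := by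
  rw [latticeZeta, ← ENNReal.tsum_mul_left]
  refine tsum_congr fun u => ?_
  rcases eq_or_ne u 0 with rfl | hu
  · simp
  have hu1 := one_le_intEuclNorm hu
  rw [if_neg (by simpa using hu), if_neg hu, ← ENNReal.ofReal_mul (by positivity), modelWeight,
    intEuclNorm_zero, mul_zero, Real.zero_rpow hb.ne', add_zero, Real.rpow_neg hK.le,
    Real.rpow_neg (by positivity), ← mul_inv, ← Real.mul_rpow hK.le (by positivity)]

lemma tsum_inv_modelWeight_fiber_le {d m : ℕ} {K L a b t : ℝ} (hK : 0 < K) (hL : 0 < L)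
    (ha : 0 < a) (ht0 : 0 < t) (ht1 : t < 1) {w : Fin m → ℤ} (hw : w ≠ 0) :
    ∑' u : Fin d → ℤ, ENNReal.ofReal (modelWeight K L a b (u, w))⁻¹ ≤
      ENNReal.ofReal (L ^ (-b)) * ENNReal.ofReal (intEuclNorm w ^ (-b)) +
        ENNReal.ofReal (K ^ (-(a * t)) * L ^ (-(b * (1 - t)))) * latticeZeta d (a * t) *
          ENNReal.ofReal (intEuclNorm w ^ (-(b * (1 - t)))) := by
  have hw1 := one_le_intEuclNorm hw
  refine (tsum_inv_rpow_add_le (T := (L * intEuclNorm w) ^ b) hK (by positivity) ha ht0 ht1).trans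
    (le_of_eq ?_)
  rw [← Real.rpow_neg_one, mul_rpow_rpow_neg hL.le (by positivity),
    mul_rpow_rpow_neg hL.le (by positivity), mul_one, ENNReal.ofReal_mul (by positivity),
    ← mul_assoc, ENNReal.ofReal_mul (by positivity), ENNReal.ofReal_mul (by positivity)]
  ring

lemma tsum_inv_modelWeight_le {d m : ℕ} {K L a b t : ℝ} (hK : 0 < K) (hL : 0 < L) (ha : 0 < a)
    (hb : 0 < b) (ht0 : 0 < t) (ht1 : t < 1) :
    ∑' p : (Fin d → ℤ) × (Fin m → ℤ),
        (if p = 0 then 0 else ENNReal.ofReal (modelWeight K L a b p)⁻¹) ≤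
      ENNReal.ofReal (K ^ (-a)) * latticeZeta d a + ENNReal.ofReal (L ^ (-b)) * latticeZeta m b +
        ENNReal.ofReal (K ^ (-(a * t)) * L ^ (-(b * (1 - t)))) *
          (latticeZeta d (a * t) * latticeZeta m (b * (1 - t))) := by
  rw [ENNReal.tsum_prod', ENNReal.tsum_comm, ENNReal.tsum_eq_add_tsum_ite 0,
    tsum_inv_modelWeight_zero_fiber hK hb, add_assoc]
  gcongr
  calc _ ≤ ∑' w : Fin m → ℤ,
          (ENNReal.ofReal (L ^ (-b)) *
              (if w = 0 then 0 else ENNReal.ofReal (intEuclNorm w ^ (-b))) +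
            ENNReal.ofReal (K ^ (-(a * t)) * L ^ (-(b * (1 - t)))) * latticeZeta d (a * t) *
              (if w = 0 then 0 else ENNReal.ofReal (intEuclNorm w ^ (-(b * (1 - t)))))) := by
        refine ENNReal.tsum_le_tsum fun w => ?_
        rcases eq_or_ne w 0 with rfl | hw
        · simp
        simpa [hw] using tsum_inv_modelWeight_fiber_le hK hL ha ht0 ht1 hw
    _ = _ := by
        rw [ENNReal.tsum_add, ENNReal.tsum_mul_left, ENNReal.tsum_mul_left, mul_assoc]
        rfl

lemma exists_splitting_exponent {d m a b : ℝ} (hd : 0 ≤ d) (hm : 0 ≤ m) (ha : 0 < a) (hb : 0 < b)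
    (hab : d / a + m / b < 1) : ∃ t, 0 < t ∧ t < 1 ∧ d < a * t ∧ m < b * (1 - t) := by
  obtain ⟨t, hda, hmb⟩ : ∃ t, d / a < t ∧ m / b < 1 - t :=
    ⟨(d / a + (1 - m / b)) / 2, by linarith, by linarith⟩
  refine ⟨t, lt_of_le_of_lt (by positivity) hda, by linarith [div_nonneg hm hb.le], ?_, ?_⟩
  · rw [mul_comm]; exact (div_lt_iff₀ ha).mp hda
  · rw [mul_comm]; exact (div_lt_iff₀ hb).mp hmb

theorem exists_tsum_inv_modelWeight_le {d m : ℕ} {a b : ℝ} (ha : 0 < a) (hb : 0 < b)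
    (hab : d / a + m / b < 1) :
    ∃ C : ℝ, 0 < C ∧ ∀ K L : ℝ, 0 < K → 0 < L →
      ∑' p : (Fin d → ℤ) × (Fin m → ℤ),
          (if p = 0 then 0 else ENNReal.ofReal (modelWeight K L a b p)⁻¹) ≤
        ENNReal.ofReal (C * (K ^ (-a) + L ^ (-b))) := by
  obtain ⟨t, ht0, ht1, hdt, hmt⟩ := exists_splitting_exponent (Nat.cast_nonneg d)
    (Nat.cast_nonneg m) ha hb hab
  set E := latticeZeta d a + latticeZeta m b + latticeZeta d (a * t) * latticeZeta m (b * (1 - t))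
  have hE : E ≠ ⊤ := by
    have hd : (d : ℝ) < a := hdt.trans (mul_lt_of_lt_one_right ha ht1)
    have hm : (m : ℝ) < b := hmt.trans (mul_lt_of_lt_one_right hb (by linarith))
    exact (ENNReal.add_lt_top.mpr ⟨ENNReal.add_lt_top.mpr ⟨latticeZeta_lt_top hd,
      latticeZeta_lt_top hm⟩, ENNReal.mul_lt_top (latticeZeta_lt_top hdt)
        (latticeZeta_lt_top hmt)⟩).ne
  refine ⟨E.toReal + 1, by positivity, fun K L hK hL => ?_⟩
  set X := K ^ (-a) + L ^ (-b)
  have hKX : K ^ (-a) ≤ X := le_add_of_nonneg_right (by positivity)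
  have hLX : L ^ (-b) ≤ X := le_add_of_nonneg_left (by positivity)
  have hKLX : K ^ (-(a * t)) * L ^ (-(b * (1 - t))) ≤ X := by
    rw [← neg_mul, ← neg_mul, Real.rpow_mul hK.le, Real.rpow_mul hL.le]
    exact rpow_mul_rpow_one_sub_le_add (by positivity) (by positivity) ht0.le ht1.le
  calc _ ≤ _ := tsum_inv_modelWeight_le hK hL ha hb ht0 ht1
    _ ≤ ENNReal.ofReal X * E := by
        rw [mul_add, mul_add]
        gcongr
    _ ≤ ENNReal.ofReal ((E.toReal + 1) * X) := by
        rw [mul_comm, ENNReal.ofReal_mul (by positivity)]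
        gcongr
        exact (ENNReal.le_ofReal_iff_toReal_le hE (by positivity)).mpr (by linarith)

lemma tsum_le_tsum_of_forall_exists_shift {ι κ : Type*} [AddGroup ι] {F G : ι × κ → ℝ≥0∞}
    (h : ∀ b, ∃ s, ∀ a, F (a, b) ≤ G (a + s, b)) : ∑' p, F p ≤ ∑' p, G p := by
  rw [ENNReal.tsum_prod', ENNReal.tsum_prod', ENNReal.tsum_comm (f := fun a b => F (a, b)),
    ENNReal.tsum_comm (f := fun a b => G (a, b))]
  refine ENNReal.tsum_le_tsum fun b => ?_
  obtain ⟨s, hs⟩ := h b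
  calc ∑' a, F (a, b) ≤ ∑' a, G (a + s, b) := ENNReal.tsum_le_tsum hs
    _ = ∑' a, G (a, b) := (Equiv.addRight s).tsum_eq fun a => G (a, b)

lemma appendEquiv_eq_zero_iff {α : Type*} [Zero α] {d m : ℕ} {p : (Fin d → α) × (Fin m → α)} :
    Fin.appendEquiv d m p = 0 ↔ p = 0 := by
  rw [← Equiv.eq_symm_apply]
  exact Iff.rfl

lemma tsum_subtype_ne_zero_eq_tsum_prod {α : Type*} [Zero α] [DecidableEq α] {d m : ℕ}
    (f : (Fin (d + m) → α) → ℝ≥0∞) :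
    ∑' v : {v : Fin (d + m) → α // v ≠ 0}, f v =
      ∑' p : (Fin d → α) × (Fin m → α), if p = 0 then 0 else f (Fin.append p.1 p.2) := by
  refine (tsum_subtype {v | v ≠ 0} f).trans ?_
  rw [← (Fin.appendEquiv d m).tsum_eq]
  congr 1
  ext p
  simp only [Set.indicator_apply, Set.mem_ofPred_eq, ne_eq, ite_not, appendEquiv_eq_zero_iff]
  rfl

lemma wMix_shiftIdx_append {d m : ℕ} (Q : Matrix (Fin d) (Fin m) ℝ) (α β : ℝ) (K L : ℕ)
    (k : Fin (d + m) → ℤ) (u : Fin d → ℤ) (w : Fin m → ℤ) :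
    wMix d m Q α β (shiftIdx d m K L k (Fin.append u w)) =
      euclNorm (fun i => ((k (Fin.castAdd m i) : ℝ) +
          Q.mulVec (fun j => (k (Fin.natAdd d j) : ℝ) + 2 * L * w j) i) + 2 * K * u i) ^ (2 * α) +
        euclNorm (fun j => (k (Fin.natAdd d j) : ℝ) + 2 * L * w j) ^ (2 * β) := by
  simp only [wMix, shiftIdx, Fin.append_left, Fin.append_right]
  push_cast
  congr 3
  ext i
  simp only [Pi.add_apply]
  ring

lemma exists_shift_modelWeight_le_wMix {d m : ℕ} {Q : Matrix (Fin d) (Fin m) ℝ} {α β : ℝ}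
    (hα : 0 ≤ α) (hβ : 0 ≤ β) {K L : ℕ} (hK : 0 < K) {k : Fin (d + m) → ℤ}
    (hk : memK d m Q K L k) (w : Fin m → ℤ) :
    ∃ s : Fin d → ℤ, (w = 0 → s = 0) ∧ ∀ u,
      modelWeight K L (2 * α) (2 * β) (u + s, w) ≤
        wMix d m Q α β (shiftIdx d m K L k (Fin.append u w)) := by
  have hb : (L : ℝ) * intEuclNorm w ≤
      euclNorm fun j => (k (Fin.natAdd d j) : ℝ) + 2 * L * w j := by
    refine mul_intEuclNorm_le_euclNorm (Nat.cast_nonneg L) (fun j => abs_le.mpr ?_) w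
    exact ⟨by exact_mod_cast (hk.2 j).1, by exact_mod_cast (hk.2 j).2.le⟩
  obtain ⟨s, hs0, ha⟩ : ∃ s : Fin d → ℤ, (w = 0 → s = 0) ∧ ∀ u, (K : ℝ) * intEuclNorm (u + s) ≤
      euclNorm fun i => ((k (Fin.castAdd m i) : ℝ) +
        Q.mulVec (fun j => (k (Fin.natAdd d j) : ℝ) + 2 * L * w j) i) + 2 * K * u i := by
    rcases eq_or_ne w 0 with rfl | hw
    · refine ⟨0, fun _ => rfl, fun u => ?_⟩
      rw [add_zero]
      refine mul_intEuclNorm_le_euclNorm (Nat.cast_nonneg K) (fun i => abs_le.mpr ?_) u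
      simpa using And.intro (hk.1 i).1 (hk.1 i).2.le
    · obtain ⟨s, hs⟩ := exists_mul_intEuclNorm_add_le_euclNorm (Nat.cast_pos.mpr hK)
        fun i => (k (Fin.castAdd m i) : ℝ) +
          Q.mulVec (fun j => (k (Fin.natAdd d j) : ℝ) + 2 * L * w j) i
      exact ⟨s, fun h => absurd h hw, hs⟩
  refine ⟨s, hs0, fun u => ?_⟩
  have := intEuclNorm_nonneg (u + s)
  have := intEuclNorm_nonneg w
  rw [wMix_shiftIdx_append, modelWeight]
  gcongr
  exact ha u

theorem stmt14_general (d m : ℕ)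
    (Q : Matrix (Fin d) (Fin m) ℝ) (α β : ℝ)
    (hβ : (m : ℝ) / 2 < β) (hα : (d : ℝ) / 2 < α)
    (hcond : (d : ℝ) / (2 * α) + (m : ℝ) / (2 * β) < 1) :
    ∃ C : ℝ, 0 < C ∧ ∀ K L : ℕ, 0 < K → 0 < L →
      ∀ k : Fin (d + m) → ℤ, memK d m Q K L k →
        (∀ v : Fin (d + m) → ℤ, v ≠ 0 → 0 < wMix d m Q α β (shiftIdx d m K L k v)) ∧
        (∑' v : {v : Fin (d + m) → ℤ // v ≠ 0},
            ENNReal.ofReal ((wMix d m Q α β (shiftIdx d m K L k v.1))⁻¹)) ≤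
          ENNReal.ofReal (C * ((K : ℝ) ^ (-(2 * α)) + (L : ℝ) ^ (-(2 * β)))) := by
  have hα0 : 0 < α := lt_of_le_of_lt (by positivity) hα
  have hβ0 : 0 < β := lt_of_le_of_lt (by positivity) hβ
  obtain ⟨C, hC, hmodel⟩ := exists_tsum_inv_modelWeight_le (d := d) (m := m)
    (by positivity : 0 < 2 * α) (by positivity : 0 < 2 * β) hcond
  refine ⟨C, hC, fun K L hK hL k hk => ?_⟩
  choose s hs0 hs using exists_shift_modelWeight_le_wMix hα0.le hβ0.le hK hk
  have hshift_ne : ∀ u w, (u, w) ≠ 0 → (u + s w, w) ≠ 0 := by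
    intro u w huw h
    obtain ⟨hu, rfl⟩ := Prod.mk_eq_zero.mp h
    rw [hs0 0 rfl, add_zero] at hu
    exact huw (Prod.mk_eq_zero.mpr ⟨hu, rfl⟩)
  have hpos : ∀ u w, (u, w) ≠ 0 →
      0 < wMix d m Q α β (shiftIdx d m K L k (Fin.append u w)) := fun u w huw =>
    (modelWeight_pos (by positivity) (by positivity) (hshift_ne u w huw)).trans_le (hs w u)
  refine ⟨fun v hv => ?_, ?_⟩
  · obtain ⟨⟨u, w⟩, rfl⟩ := (Fin.appendEquiv d m).surjective v
    exact hpos u w fun h => hv (appendEquiv_eq_zero_iff.mpr h)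
  rw [tsum_subtype_ne_zero_eq_tsum_prod fun v =>
    ENNReal.ofReal (wMix d m Q α β (shiftIdx d m K L k v))⁻¹]
  refine (tsum_le_tsum_of_forall_exists_shift fun w => ⟨s w, fun u => ?_⟩).trans
    (hmodel K L (by positivity) (by positivity))
  by_cases huw : (u, w) = 0
  · simp [huw]
  rw [if_neg huw, if_neg (hshift_ne u w huw)]
  exact ENNReal.ofReal_le_ofReal <| inv_anti₀
    (modelWeight_pos (by positivity) (by positivity) (hshift_ne u w huw)) (hs w u)

/-- there is `C > 0` independent of `K, L` such that for every `k ∈ 𝒦_{K,L}`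
the quantity `g(k,v) = ‖k_I + 2K v_I + Q(k_II + 2L v_II)‖^(2α) + ‖k_II + 2L v_II‖^(2β)` is
strictly positive for `v ≠ 0` and `Σ_{v ≠ 0} g(k,v)⁻¹ ≤ C (K^{-2α} + L^{-2β})`. -/
theorem stmt14 (d m : ℕ) (hd : 1 ≤ d) (hm : 1 ≤ m)
    (Q : Matrix (Fin d) (Fin m) ℝ) (α β : ℝ)
    (hβ : (m : ℝ) / 2 < β) (hαβ : β ≤ α) (hα : (d : ℝ) / 2 < α)
    (hcond : (d : ℝ) / (2 * α) + (m : ℝ) / (2 * β) < 1) :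
    ∃ C : ℝ, 0 < C ∧ ∀ K L : ℕ, 0 < K → 0 < L →
      ∀ k : Fin (d + m) → ℤ, memK d m Q K L k →
        (∀ v : Fin (d + m) → ℤ, v ≠ 0 → 0 < wMix d m Q α β (shiftIdx d m K L k v)) ∧
        (∑' v : {v : Fin (d + m) → ℤ // v ≠ 0},
            ENNReal.ofReal ((wMix d m Q α β (shiftIdx d m K L k v.1))⁻¹)) ≤
          ENNReal.ofReal (C * ((K : ℝ) ^ (-(2 * α)) + (L : ℝ) ^ (-(2 * β)))) :=
  stmt14_general d m Q α β hβ hα hcond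
end
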